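/- Let ϑ > 0, λ > 0, τ > 1/ϑ, and ζ ∈ R^d with ζ ≠ 0. Consider minimizing f(δ) = (ϑ/2)‖ζ − δ‖² + p_τ(‖δ‖, λ) over δ ∈ R^d, where p_τ is the MCP penalty. If ‖ζ‖ > τλ, then δ = ζ is a global minimizer, with f(ζ) = τλ²/2 ≤ f(δ) for all δ. -/
import Mathlib


open MeasureTheory

lemma mcp_int_low {c t : ℝ} (hc : 0 < c) (ht0 : 0 ≤ t) (htc : t ≤ c) :
    (∫ x in (0:ℝ)..t, max (1 - x / c) 0) = t - t ^ 2 / (2 * c) := by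
  have h1 : (∫ x in (0:ℝ)..t, max (1 - x / c) 0) = ∫ x in (0:ℝ)..t, (1 - x / c) := by
    apply intervalIntegral.integral_congr
    intro x hx
    rw [Set.uIcc_of_le ht0] at hx
    have hx1 : x ≤ c := le_trans hx.2 htc
    have : 0 ≤ 1 - x / c := by
      have : x / c ≤ 1 := (div_le_one hc).2 hx1
      linarith
    simp [max_eq_left this]
  rw [h1]
  rw [intervalIntegral.integral_sub intervalIntegrable_const
      ((intervalIntegral.intervalIntegrable_id).div_const c)]
  simp [intervalIntegral.integral_div, integral_id]
  ring

lemma mcp_int_high {c t : ℝ} (hc : 0 < c) (htc : c ≤ t) :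
    (∫ x in (0:ℝ)..t, max (1 - x / c) 0) = c / 2 := by
  have hcont : Continuous fun x : ℝ => max (1 - x / c) 0 :=
    (continuous_const.sub (continuous_id.div_const c)).max continuous_const
  have hsplit := intervalIntegral.integral_add_adjacent_intervals
    (μ := volume) (a := (0:ℝ)) (b := c) (c := t)
    (hcont.intervalIntegrable _ _) (hcont.intervalIntegrable _ _)
  have hzero : (∫ x in c..t, max (1 - x / c) 0) = 0 := by
    have : (∫ x in c..t, max (1 - x / c) 0) = ∫ x in c..t, (0:ℝ) := by
      apply intervalIntegral.integral_congr
      intro x hx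
      rw [Set.uIcc_of_le htc] at hx
      have : 1 - x / c ≤ 0 := by
        have : 1 ≤ x / c := (one_le_div hc).2 hx.1
        linarith
      simp [max_eq_right this]
    simp [this]
  have hlow : (∫ x in (0:ℝ)..c, max (1 - x / c) 0) = c - c ^ 2 / (2 * c) :=
    mcp_int_low hc hc.le le_rfl
  rw [← hsplit, hzero, hlow]
  field_simp
  ring

theorem stmt8 {d : ℕ} (ϑ lam τ : ℝ) (hϑ : 0 < ϑ) (hlam : 0 < lam)
    (hτ : 1 / ϑ < τ) (ζ : EuclideanSpace ℝ (Fin d)) (hζ : ζ ≠ 0)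
    (hbig : τ * lam < ‖ζ‖) :
    letI p : ℝ → ℝ := fun t => lam * ∫ x in (0:ℝ)..t, max (1 - x / (τ * lam)) 0
    letI f : EuclideanSpace ℝ (Fin d) → ℝ :=
      fun δ => ϑ / 2 * ‖ζ - δ‖ ^ 2 + p ‖δ‖
    f ζ = τ * lam ^ 2 / 2 ∧ ∀ δ, f ζ ≤ f δ := by
  simp only
  have hτpos : 0 < τ := lt_trans (div_pos one_pos hϑ) hτ
  have hc : 0 < τ * lam := mul_pos hτpos hlam
  have hϑτ : 1 < τ * ϑ := by
    rw [div_lt_iff₀ hϑ] at hτ; linarith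
  have hfζ : ϑ / 2 * ‖ζ - ζ‖ ^ 2 + lam * (∫ x in (0:ℝ)..‖ζ‖, max (1 - x / (τ * lam)) 0)
        = τ * lam ^ 2 / 2 := by
    rw [mcp_int_high hc hbig.le]
    simp
    ring
  refine ⟨hfζ, fun δ => ?_⟩
  rw [hfζ]
  show τ * lam ^ 2 / 2 ≤
      ϑ / 2 * ‖ζ - δ‖ ^ 2 + lam * (∫ x in (0:ℝ)..‖δ‖, max (1 - x / (τ * lam)) 0)
  rcases le_or_gt (τ * lam) ‖δ‖ with h | h
  · rw [mcp_int_high hc h]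
    have : 0 ≤ ϑ / 2 * ‖ζ - δ‖ ^ 2 := by positivity
    nlinarith
  · rw [mcp_int_low hc (norm_nonneg δ) h.le]
    set t := ‖δ‖ with ht
    have ht0 : 0 ≤ t := norm_nonneg δ
    have hnd : τ * lam - t ≤ ‖ζ - δ‖ := by
      have := norm_sub_norm_le ζ δ
      linarith
    have hsq : (τ * lam - t) ^ 2 ≤ ‖ζ - δ‖ ^ 2 := by
      have h1 : 0 ≤ τ * lam - t := by linarith
      nlinarith [norm_nonneg (ζ - δ)]
    have key : τ * lam ^ 2 / 2 ≤ ϑ / 2 * (τ * lam - t) ^ 2 + lam * (t - t ^ 2 / (2 * (τ * lam))) := by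
      have hexp : ϑ / 2 * (τ * lam - t) ^ 2 + lam * (t - t ^ 2 / (2 * (τ * lam))) - τ * lam ^ 2 / 2
          = (ϑ / 2 - 1 / (2 * τ)) * (t - τ * lam) ^ 2 := by
        field_simp
        ring
      have hcoef : 0 ≤ ϑ / 2 - 1 / (2 * τ) := by
        rw [sub_nonneg, div_le_div_iff₀ (by linarith) (by norm_num)]
        nlinarith
      nlinarith [sq_nonneg (t - τ * lam), mul_nonneg hcoef (sq_nonneg (t - τ * lam))]
    nlinarith [mul_le_mul_of_nonneg_left hsq (le_of_lt (half_pos hϑ))]
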